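/- The LIKE mechanism is not bounded envy-free ex-post: for the instance with 2 agents who both have utility 1 for all m items and bid truthfully, the outcome in which agent 1 receives all m items occurs with probability (1/2)^m > 0, and in this outcome agent 2's utility for agent 1's allocation exceeds her utility for her own (empty) allocation by m, i.e., u_2(A_1) − u_2(A_2) = m. Consequently, for every constant c there exists m and an outcome of positive probability in which u_2(A_1) − u_2(A_2) > c. -/

import Mathlib

open Finset

attribute [local instance] Classical.propDecidable

noncomputable section

/-- Probability of the allocation decision `a k` for item `k` under the LIKE mechanism:
if nobody bids the item stays unallocated; otherwise it goes uniformly at random to one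
of the bidders `B k`. -/
def likeStepProb {n m : ℕ} (B : Fin m → Finset (Fin n))
    (a : Fin m → Option (Fin n)) (k : Fin m) : ℝ :=
  if B k = ∅ then (if a k = none then 1 else 0)
  else
    match a k with
    | none => 0
    | some j => if j ∈ B k then 1 / (B k).card else 0

/-- Probability of the full outcome `a` under the LIKE mechanism (items are allocated
independently). -/
def likeProb {n m : ℕ} (B : Fin m → Finset (Fin n))
    (a : Fin m → Option (Fin n)) : ℝ :=
  ∏ k, likeStepProb B a k

/-- Realized utility, w.r.t. the utility function `u`, of agent `j`'s bundle in outcome `a`. -/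
def realizedUtil {n m : ℕ} (u : Fin m → ℝ) (a : Fin m → Option (Fin n)) (j : Fin n) : ℝ :=
  ∑ k, if a k = some j then u k else 0

section DictatorOutcome

variable {n m : ℕ}

lemma likeStepProb_some_of_mem {B : Fin m → Finset (Fin n)} {a : Fin m → Option (Fin n)}
    {k : Fin m} {j : Fin n} (ha : a k = some j) (hj : j ∈ B k) :
    likeStepProb B a k = 1 / (B k).card := by
  simp [likeStepProb, ne_empty_of_mem hj, ha, hj]

lemma likeProb_const_some {B : Finset (Fin n)} {j : Fin n} (hj : j ∈ B) :
    likeProb (fun _ : Fin m => B) (fun _ => some j) = (1 / B.card : ℝ) ^ m := by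
  have hstep (k : Fin m) : likeStepProb (fun _ => B) (fun _ => some j) k = 1 / B.card :=
    likeStepProb_some_of_mem rfl hj
  simp only [likeProb, hstep, prod_const, card_univ, Fintype.card_fin]

lemma realizedUtil_const_some_self (u : Fin m → ℝ) (j : Fin n) :
    realizedUtil u (fun _ => some j) j = ∑ k, u k := by
  simp [realizedUtil]

lemma realizedUtil_const_some_of_ne (u : Fin m → ℝ) {i j : Fin n} (hij : i ≠ j) :
    realizedUtil u (fun _ => some i) j = 0 := by
  simp [realizedUtil, hij]

end DictatorOutcome

/-- **The LIKE mechanism is not bounded envy-free ex-post.**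
Take 2 agents who both have utility `1` for all `m` items and bid truthfully (so every
item's bidder set is `{1, 2}`).  The outcome in which agent 1 receives all `m` items
occurs with probability `(1/2)^m > 0`, and in this outcome agent 2's utility for agent
1's allocation exceeds her utility for her own (empty) allocation by `m`.  Consequently,
for every constant `c` there exist `m` and an outcome of positive probability in which
`u_2(A_1) − u_2(A_2) > c`. -/
theorem like_not_boundedEnvyFree_exPost :
    (∀ m : ℕ,
      likeProb (fun _ : Fin m => (Finset.univ : Finset (Fin 2)))
          (fun _ : Fin m => (some 0 : Option (Fin 2))) = (1 / 2 : ℝ) ^ m ∧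
      (0 : ℝ) < (1 / 2 : ℝ) ^ m ∧
      realizedUtil (fun _ : Fin m => (1 : ℝ)) (fun _ : Fin m => (some 0 : Option (Fin 2))) 0 -
          realizedUtil (fun _ : Fin m => (1 : ℝ)) (fun _ : Fin m => (some 0 : Option (Fin 2))) 1 = m) ∧
    (∀ c : ℝ, ∃ m : ℕ, ∃ a : Fin m → Option (Fin 2),
      0 < likeProb (fun _ : Fin m => (Finset.univ : Finset (Fin 2))) a ∧
      realizedUtil (fun _ : Fin m => (1 : ℝ)) a 0 -
          realizedUtil (fun _ : Fin m => (1 : ℝ)) a 1 > c) := by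
  have hprob (m : ℕ) : likeProb (fun _ : Fin m => (univ : Finset (Fin 2)))
      (fun _ => some 0) = (1 / 2 : ℝ) ^ m := by
    simpa using likeProb_const_some (m := m) (mem_univ (0 : Fin 2))
  have henvy (m : ℕ) :
      realizedUtil (fun _ : Fin m => (1 : ℝ)) (fun _ => (some 0 : Option (Fin 2))) 0 -
        realizedUtil (fun _ : Fin m => (1 : ℝ)) (fun _ => (some 0 : Option (Fin 2))) 1 = m := by
    rw [realizedUtil_const_some_self, realizedUtil_const_some_of_ne _ zero_ne_one]
    simp
  refine ⟨fun m => ⟨hprob m, by positivity, henvy m⟩, fun c => ?_⟩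
  obtain ⟨m, hm⟩ := exists_nat_gt c
  exact ⟨m, fun _ => some 0, hprob m ▸ by positivity, (henvy m).symm ▸ hm⟩

end
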